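/- There exist four closed line segments in ℝ³ such that the set of lines meeting all four segments has exactly four elements. -/

import Mathlib

/-!
Put four pairwise disjoint segments on one family of rulings of the hyperboloid
`x² + y² - z² = 1`. A transversal meets the hyperboloid in three distinct points, so it lies on it
and is a ruling; it cannot be a ruling of the same family, since those are pairwise disjoint.
Writing points as `(z, t) ∈ ℂ × ℝ`, the two families are `t ↦ (w (1 + i t), t)` and
`t ↦ (c (1 - i t), t)` with `|w| = |c| = 1`, and they cross at height `t` exactly when
`c w̄ = (1 + i t) / (1 - i t)`, the unit number of argument `2 arctan t`. As
`2 (arctan 3 + arctan 2) = 3π/2`, a segment with `t ∈ [-2, 3]` is met exactly by the rulings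
whose `c` avoids an open quarter of the unit circle. Turning the segment by quarter turns about
the `z`-axis, the four excluded quarters tile the circle up to their endpoints `±1, ±i`, which
leaves exactly four transversals.
-/

open Set

noncomputable section

/-- The line in ℝ³ through `a` with direction `v`. -/
def lineThrough (a v : ℝ × ℝ × ℝ) : Set (ℝ × ℝ × ℝ) :=
  {p | ∃ r : ℝ, p = a + r • v}

/-- `L` is a line in ℝ³. -/
def IsLine (L : Set (ℝ × ℝ × ℝ)) : Prop :=
  ∃ a v : ℝ × ℝ × ℝ, v ≠ 0 ∧ L = lineThrough a v

/-- `L` is a transversal to the family of sets `s`: it is a line meeting every `s i`. -/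
def IsTransversal {n : ℕ} (s : Fin n → Set (ℝ × ℝ × ℝ)) (L : Set (ℝ × ℝ × ℝ)) : Prop :=
  IsLine L ∧ ∀ i, (L ∩ s i).Nonempty

/-- Two transversals `L₀`, `L₁` to the family `s` lie in the same connected component of
transversals: one can be moved continuously to the other while remaining a transversal. -/
def SameComp {n : ℕ} (s : Fin n → Set (ℝ × ℝ × ℝ)) (L₀ L₁ : Set (ℝ × ℝ × ℝ)) : Prop :=
  ∃ a v : ℝ → ℝ × ℝ × ℝ,
    ContinuousOn a (Icc 0 1) ∧ ContinuousOn v (Icc 0 1) ∧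
    (∀ t ∈ Icc (0:ℝ) 1, v t ≠ 0) ∧
    (∀ t ∈ Icc (0:ℝ) 1, ∀ i, (lineThrough (a t) (v t) ∩ s i).Nonempty) ∧
    lineThrough (a 0) (v 0) = L₀ ∧ lineThrough (a 1) (v 1) = L₁

open Function

namespace Hyperboloid

def quadForm (p : ℝ × ℝ × ℝ) : ℝ := p.1 ^ 2 + p.2.1 ^ 2 - p.2.2 ^ 2

def polarForm (p q : ℝ × ℝ × ℝ) : ℝ := p.1 * q.1 + p.2.1 * q.2.1 - p.2.2 * q.2.2

def hyperboloid : Set (ℝ × ℝ × ℝ) := {p | quadForm p = 1}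

lemma quadForm_add_smul (a v : ℝ × ℝ × ℝ) (r : ℝ) :
    quadForm (a + r • v) = quadForm a + 2 * r * polarForm a v + r ^ 2 * quadForm v := by
  simp only [quadForm, polarForm, Prod.fst_add, Prod.snd_add, Prod.smul_fst, Prod.smul_snd,
    smul_eq_mul]
  ring

lemma lineThrough_subset_hyperboloid_iff {a v : ℝ × ℝ × ℝ} :
    lineThrough a v ⊆ hyperboloid ↔
      quadForm a = 1 ∧ polarForm a v = 0 ∧ quadForm v = 0 := by
  constructor
  · intro h
    have hr : ∀ r : ℝ, quadForm a + 2 * r * polarForm a v + r ^ 2 * quadForm v = 1 :=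
      fun r => quadForm_add_smul a v r ▸ h ⟨r, rfl⟩
    have h0 := hr 0
    have h1 := hr 1
    have h2 := hr (-1)
    exact ⟨by linarith, by linarith, by linarith⟩
  · rintro ⟨ha, hav, hv⟩ p ⟨r, rfl⟩
    simp only [hyperboloid, mem_ofPred_eq, quadForm_add_smul, ha, hav, hv]
    ring

lemma quadratic_coeffs_eq_zero {α β γ r₀ r₁ r₂ : ℝ} (h₀₁ : r₀ ≠ r₁) (h₀₂ : r₀ ≠ r₂)
    (h₁₂ : r₁ ≠ r₂) (h : ∀ r ∈ ({r₀, r₁, r₂} : Set ℝ), α * r ^ 2 + β * r + γ = 0) :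
    α = 0 ∧ β = 0 ∧ γ = 0 := by
  have e₀ := h r₀ (by simp)
  have e₁ := h r₁ (by simp)
  have e₂ := h r₂ (by simp)
  have d₁ : α * (r₀ + r₁) + β = 0 := by
    refine (mul_eq_zero.mp ?_).resolve_left (sub_ne_zero.mpr h₀₁)
    linear_combination e₀ - e₁
  have d₂ : α * (r₀ + r₂) + β = 0 := by
    refine (mul_eq_zero.mp ?_).resolve_left (sub_ne_zero.mpr h₀₂)
    linear_combination e₀ - e₂
  have hα : α = 0 := by
    refine (mul_eq_zero.mp ?_).resolve_right (sub_ne_zero.mpr h₁₂)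
    linear_combination d₁ - d₂
  subst hα
  have hβ : β = 0 := by linarith
  subst hβ
  exact ⟨rfl, rfl, by linarith⟩

lemma lineThrough_subset_hyperboloid {a v : ℝ × ℝ × ℝ} {r₀ r₁ r₂ : ℝ} (h₀₁ : r₀ ≠ r₁)
    (h₀₂ : r₀ ≠ r₂) (h₁₂ : r₁ ≠ r₂) (h : ∀ r ∈ ({r₀, r₁, r₂} : Set ℝ), a + r • v ∈ hyperboloid) :
    lineThrough a v ⊆ hyperboloid := by
  obtain ⟨hv, hav, ha⟩ := quadratic_coeffs_eq_zero (α := quadForm v) (β := 2 * polarForm a v)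
    (γ := quadForm a - 1) h₀₁ h₀₂ h₁₂ fun r hr => by
      have := h r hr
      simp only [hyperboloid, mem_ofPred_eq, quadForm_add_smul] at this
      linear_combination this
  exact lineThrough_subset_hyperboloid_iff.mpr ⟨by linarith, by linarith, hv⟩

lemma lineThrough_eq_of_mem_of_smul {a v b : ℝ × ℝ × ℝ} {k : ℝ} (hb : b ∈ lineThrough a v)
    (hk : k ≠ 0) : lineThrough b (k • v) = lineThrough a v := by
  obtain ⟨s, rfl⟩ := hb
  ext p
  constructor
  · rintro ⟨r, rfl⟩
    exact ⟨s + r * k, by rw [add_smul, smul_smul, add_assoc]⟩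
  · rintro ⟨r, rfl⟩
    refine ⟨(r - s) / k, ?_⟩
    rw [smul_smul, div_mul_cancel₀ _ hk, sub_smul, add_add_sub_cancel]

lemma exists_lineThrough_eq_of_ne_zero {a v : ℝ × ℝ × ℝ} (hv : v.2.2 ≠ 0) :
    ∃ c d : ℝ × ℝ, lineThrough a v = lineThrough (c.1, c.2, 0) (d.1, d.2, 1) := by
  set s := -a.2.2 / v.2.2
  refine ⟨(a.1 + s * v.1, a.2.1 + s * v.2.1), (v.1 / v.2.2, v.2.1 / v.2.2), ?_⟩
  have hb : ((a.1 + s * v.1, a.2.1 + s * v.2.1, 0) : ℝ × ℝ × ℝ) ∈ lineThrough a v := by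
    refine ⟨s, ?_⟩
    simp only [s, Prod.ext_iff, Prod.fst_add, Prod.snd_add, Prod.smul_fst, Prod.smul_snd,
      smul_eq_mul]
    field_simp
    simp
  rw [← lineThrough_eq_of_mem_of_smul hb (inv_ne_zero hv)]
  congr 1
  simp only [Prod.ext_iff, Prod.smul_fst, Prod.smul_snd, smul_eq_mul]
  field_simp
  simp

def rulingA (w : ℝ × ℝ) (t : ℝ) : ℝ × ℝ × ℝ := (w.1 - t * w.2, w.2 + t * w.1, t)

def rulingB (c : ℝ × ℝ) (t : ℝ) : ℝ × ℝ × ℝ := (c.1 + t * c.2, c.2 - t * c.1, t)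

lemma range_rulingA (w : ℝ × ℝ) :
    range (rulingA w) = lineThrough (w.1, w.2, 0) (-w.2, w.1, 1) := by
  ext p
  simp only [mem_range, lineThrough, mem_ofPred_eq, rulingA, Prod.ext_iff, Prod.fst_add,
    Prod.snd_add, Prod.smul_fst, Prod.smul_snd, smul_eq_mul]
  constructor <;> rintro ⟨t, h₁, h₂, h₃⟩ <;> exact ⟨t, by linarith, by linarith, by linarith⟩

lemma range_rulingB (c : ℝ × ℝ) :
    range (rulingB c) = lineThrough (c.1, c.2, 0) (c.2, -c.1, 1) := by
  ext p
  simp only [mem_range, lineThrough, mem_ofPred_eq, rulingB, Prod.ext_iff, Prod.fst_add,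
    Prod.snd_add, Prod.smul_fst, Prod.smul_snd, smul_eq_mul]
  constructor <;> rintro ⟨t, h₁, h₂, h₃⟩ <;> exact ⟨t, by linarith, by linarith, by linarith⟩

lemma rulingA_mem_hyperboloid {w : ℝ × ℝ} (hw : w.1 ^ 2 + w.2 ^ 2 = 1) (t : ℝ) :
    rulingA w t ∈ hyperboloid := by
  simp only [hyperboloid, mem_ofPred_eq, quadForm, rulingA]
  linear_combination (1 + t ^ 2) * hw

lemma eq_of_rulingA_eq {w w' : ℝ × ℝ} {t t' : ℝ} (h : rulingA w t = rulingA w' t') : w = w' := by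
  simp only [rulingA, Prod.mk.injEq] at h
  obtain ⟨h₁, h₂, rfl⟩ := h
  have hpos : (0 : ℝ) < 1 + t ^ 2 := by positivity
  ext
  · refine mul_right_cancel₀ hpos.ne' ?_
    linear_combination h₁ + t * h₂
  · refine mul_right_cancel₀ hpos.ne' ?_
    linear_combination h₂ - t * h₁

lemma injective_range_rulingB : Injective fun c => range (rulingB c) := by
  intro c c' (h : range (rulingB c) = range (rulingB c'))
  obtain ⟨t, ht⟩ : rulingB c 0 ∈ range (rulingB c') := h ▸ mem_range_self 0
  simp only [rulingB, Prod.mk.injEq] at ht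
  obtain ⟨h₁, h₂, rfl⟩ := ht
  ext <;> simp_all

lemma exists_eq_range_ruling {L : Set (ℝ × ℝ × ℝ)} (hL : IsLine L) (hLH : L ⊆ hyperboloid) :
    ∃ c : ℝ × ℝ, c.1 ^ 2 + c.2 ^ 2 = 1 ∧ (L = range (rulingA c) ∨ L = range (rulingB c)) := by
  obtain ⟨a, v, hv, rfl⟩ := hL
  have hv₃ : v.2.2 ≠ 0 := by
    intro h₃
    obtain ⟨-, -, hq⟩ := lineThrough_subset_hyperboloid_iff.mp hLH
    simp only [quadForm, h₃] at hq
    have h₁ : v.1 = 0 := by nlinarith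
    have h₂ : v.2.1 = 0 := by nlinarith
    exact hv (Prod.ext h₁ (Prod.ext h₂ h₃))
  obtain ⟨c, d, hcd⟩ := exists_lineThrough_eq_of_ne_zero (a := a) hv₃
  rw [hcd] at hLH ⊢
  obtain ⟨hc, hcd, hd⟩ := lineThrough_subset_hyperboloid_iff.mp hLH
  simp only [quadForm, polarForm] at hc hcd hd
  -- `d ⊥ c` with `|c| = |d| = 1`, so `d` is `c` turned by a right angle one way or the other
  set σ := c.1 * d.2 - c.2 * d.1
  have hσ : σ * σ = 1 := by
    linear_combination (c.1 ^ 2 + c.2 ^ 2) * hd + hc - (c.1 * d.1 + c.2 * d.2) * hcd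
  refine ⟨c, by linarith, ?_⟩
  rcases mul_self_eq_one_iff.mp hσ with h | h
  · obtain rfl : d = (-c.2, c.1) := Prod.ext
      (by linear_combination -d.1 * hc + c.1 * hcd - c.2 * h)
      (by linear_combination -d.2 * hc + c.2 * hcd + c.1 * h)
    exact .inl (range_rulingA c).symm
  · obtain rfl : d = (c.2, -c.1) := Prod.ext
      (by linear_combination -d.1 * hc + c.1 * hcd - c.2 * h)
      (by linear_combination -d.2 * hc + c.2 * hcd + c.1 * h)
    exact .inr (range_rulingB c).symm

lemma segment_rulingA (w : ℝ × ℝ) {t₀ t₁ : ℝ} (h : t₀ ≤ t₁) :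
    segment ℝ (rulingA w t₀) (rulingA w t₁) = rulingA w '' Icc t₀ t₁ := by
  have hA : rulingA w = AffineMap.lineMap (rulingA w 0) (rulingA w 1) := by
    funext t
    simp only [AffineMap.lineMap_apply_module', rulingA, Prod.ext_iff, Prod.fst_add,
      Prod.snd_add, Prod.smul_fst, Prod.smul_snd, Prod.fst_sub, Prod.snd_sub, smul_eq_mul]
    refine ⟨by ring, by ring, by ring⟩
  rw [hA, ← image_segment, segment_eq_Icc h]

/-- In the notation of the header, `x + i y = c w̄ = (1 + i t) / (1 - i t)`, and `7 x + y = -5` is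
the chord of the unit circle through its values at `t = -2` and `t = 3`. -/
lemma chord_bound_of_rulingB_eq_rulingA {c w : ℝ × ℝ} {t : ℝ} (hw : w.1 ^ 2 + w.2 ^ 2 = 1)
    (ht : t ∈ Icc (-2 : ℝ) 3) (h : rulingB c t = rulingA w t) :
    -5 ≤ 7 * (c.1 * w.1 + c.2 * w.2) + (c.2 * w.1 - c.1 * w.2) := by
  simp only [rulingB, rulingA, Prod.mk.injEq] at h
  obtain ⟨h₁, h₂, -⟩ := h
  set x := c.1 * w.1 + c.2 * w.2
  set y := c.2 * w.1 - c.1 * w.2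
  have hx : x + t * y = 1 := by linear_combination w.1 * h₁ + w.2 * h₂ + hw
  have hy : y - t * x = t := by linear_combination w.1 * h₂ - w.2 * h₁ + t * hw
  have hpos : (0 : ℝ) < 1 + t ^ 2 := by positivity
  have key : (1 + t ^ 2) * (7 * x + y + 5) = 2 * (3 - t) * (t + 2) := by
    linear_combination (7 + t) * hx + (1 - 7 * t) * hy
  have : 0 ≤ (1 + t ^ 2) * (7 * x + y + 5) := by
    rw [key]; exact mul_nonneg (mul_nonneg zero_le_two (by linarith [ht.2])) (by linarith [ht.1])
  linarith [nonneg_of_mul_nonneg_right this hpos]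

end Hyperboloid

namespace FourSegments

open Hyperboloid

/-- `segmentFoot k = iᵏ (-3 + 4 i) / 5`; the factor `(-3 + 4 i) / 5 = (1 + 2 i) / (1 - 2 i)` puts
the ends of the excluded quarters at `±1, ±i`. -/
def segmentFoot : Fin 4 → ℝ × ℝ := ![(-3/5, 4/5), (-4/5, -3/5), (3/5, -4/5), (4/5, 3/5)]

def transversalFoot : Fin 4 → ℝ × ℝ := ![(1, 0), (0, 1), (-1, 0), (0, -1)]

def seg (k : Fin 4) : Set (ℝ × ℝ × ℝ) :=
  segment ℝ (rulingA (segmentFoot k) (-2)) (rulingA (segmentFoot k) 3)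

lemma segmentFoot_norm (k : Fin 4) : (segmentFoot k).1 ^ 2 + (segmentFoot k).2 ^ 2 = 1 := by
  fin_cases k <;> norm_num [segmentFoot]

lemma segmentFoot_injective : Injective segmentFoot := by
  intro j k
  fin_cases j <;> fin_cases k <;> norm_num [segmentFoot, Prod.ext_iff]

lemma transversalFoot_injective : Injective transversalFoot := by
  intro j k
  fin_cases j <;> fin_cases k <;> norm_num [transversalFoot, Prod.ext_iff]

lemma mem_seg_iff {k : Fin 4} {p : ℝ × ℝ × ℝ} :
    p ∈ seg k ↔ ∃ t ∈ Icc (-2 : ℝ) 3, rulingA (segmentFoot k) t = p := by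
  rw [seg, segment_rulingA _ (by norm_num), mem_image]

lemma exists_transversalFoot_eq {c : ℝ × ℝ} (hc : c.1 ^ 2 + c.2 ^ 2 = 1)
    (hadd : |c.1 + c.2| ≤ 1) (hsub : |c.1 - c.2| ≤ 1) : ∃ j, transversalFoot j = c := by
  obtain ⟨c₁, c₂⟩ := c
  dsimp only at *
  have hadd' := (sq_le_one_iff_abs_le_one _).mpr hadd
  have hsub' := (sq_le_one_iff_abs_le_one _).mpr hsub
  have hprod : c₁ * c₂ = 0 := by nlinarith
  rcases mul_eq_zero.mp hprod with rfl | rfl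
  · rcases (by simpa using hc : c₂ = 1 ∨ c₂ = -1) with rfl | rfl
    exacts [⟨1, rfl⟩, ⟨3, rfl⟩]
  · rcases (by simpa using hc : c₁ = 1 ∨ c₁ = -1) with rfl | rfl
    exacts [⟨0, rfl⟩, ⟨2, rfl⟩]

lemma subset_hyperboloid_of_meets {L : Set (ℝ × ℝ × ℝ)} (hL : IsLine L)
    (h : ∀ k, (L ∩ seg k).Nonempty) : L ⊆ hyperboloid := by
  obtain ⟨a, v, -, rfl⟩ := hL
  have hpt : ∀ k, ∃ r t, rulingA (segmentFoot k) t = a + r • v := fun k => by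
    obtain ⟨_, ⟨r, rfl⟩, hp⟩ := h k
    obtain ⟨t, -, ht⟩ := mem_seg_iff.mp hp
    exact ⟨r, t, ht⟩
  choose r t hrt using hpt
  have hr : ∀ j k, j ≠ k → r j ≠ r k := fun j k hjk hr =>
    hjk (segmentFoot_injective (eq_of_rulingA_eq (by rw [hrt, hrt, hr])))
  refine lineThrough_subset_hyperboloid (hr 0 1 (by decide)) (hr 0 2 (by decide))
    (hr 1 2 (by decide)) ?_
  rintro _ (rfl | rfl | rfl) <;> exact hrt _ ▸ rulingA_mem_hyperboloid (segmentFoot_norm _) _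

lemma not_forall_meets_rulingA (c : ℝ × ℝ) : ¬ ∀ k, (range (rulingA c) ∩ seg k).Nonempty := by
  intro h
  have hc : ∀ k, c = segmentFoot k := fun k => by
    obtain ⟨_, ⟨s, rfl⟩, hp⟩ := h k
    obtain ⟨t, -, ht⟩ := mem_seg_iff.mp hp
    exact eq_of_rulingA_eq ht.symm
  exact absurd ((hc 0).symm.trans (hc 1)) (segmentFoot_injective.ne (by decide))

lemma exists_transversalFoot_eq_of_meets {c : ℝ × ℝ} (hc : c.1 ^ 2 + c.2 ^ 2 = 1)
    (h : ∀ k, (range (rulingB c) ∩ seg k).Nonempty) : ∃ j, transversalFoot j = c := by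
  have hbound : ∀ k, -5 ≤ 7 * (c.1 * (segmentFoot k).1 + c.2 * (segmentFoot k).2)
      + (c.2 * (segmentFoot k).1 - c.1 * (segmentFoot k).2) := fun k => by
    obtain ⟨_, ⟨s, rfl⟩, hp⟩ := h k
    obtain ⟨t, ht, hts⟩ := mem_seg_iff.mp hp
    obtain rfl : t = s := congrArg (fun p => p.2.2) hts
    exact chord_bound_of_rulingB_eq_rulingA (segmentFoot_norm k) ht hts.symm
  have h₀ := hbound 0
  have h₁ := hbound 1
  have h₂ := hbound 2
  have h₃ := hbound 3
  simp only [segmentFoot, Fin.isValue, Matrix.cons_val_zero, Matrix.cons_val_one,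
    Matrix.cons_val] at h₀ h₁ h₂ h₃
  exact exists_transversalFoot_eq hc (abs_le.mpr ⟨by linarith, by linarith⟩)
    (abs_le.mpr ⟨by linarith, by linarith⟩)

lemma isLine_range_rulingB (c : ℝ × ℝ) : IsLine (range (rulingB c)) :=
  ⟨_, _, fun h => one_ne_zero (congrArg (fun p => p.2.2) h), range_rulingB c⟩

lemma rulingB_transversalFoot_meets (j k : Fin 4) :
    (range (rulingB (transversalFoot j)) ∩ seg k).Nonempty := by
  suffices ∃ t ∈ Icc (-2 : ℝ) 3, rulingA (segmentFoot k) t = rulingB (transversalFoot j) t by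
    obtain ⟨t, ht, h⟩ := this
    exact ⟨_, mem_range_self t, mem_seg_iff.mpr ⟨t, ht, h⟩⟩
  -- by the quarter-turn symmetry the crossing height depends only on `j - k`
  refine ⟨![-2, -1/3, 1/2, 3] (j - k), ?_, ?_⟩ <;>
    fin_cases j <;> fin_cases k <;>
    simp [rulingA, rulingB, segmentFoot, transversalFoot] <;> norm_num

lemma setOf_isTransversal_seg_eq :
    {L | IsTransversal seg L} =
      range fun j => range (rulingB (transversalFoot j)) := by
  apply Subset.antisymm
  · rintro L ⟨hL, h⟩
    obtain ⟨c, hc, rfl | rfl⟩ := exists_eq_range_ruling hL (subset_hyperboloid_of_meets hL h)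
    · exact absurd h (not_forall_meets_rulingA c)
    · obtain ⟨j, rfl⟩ := exists_transversalFoot_eq_of_meets hc h
      exact ⟨j, rfl⟩
  · rintro _ ⟨j, rfl⟩
    exact ⟨isLine_range_rulingB _, rulingB_transversalFoot_meets j⟩

end FourSegments

open FourSegments Hyperboloid in
/-- there exist four segments in ℝ³ whose set of common transversal lines
has exactly four elements. -/
theorem stmt_3 :
    ∃ x y : Fin 4 → ℝ × ℝ × ℝ,
      {L : Set (ℝ × ℝ × ℝ) |
        IsLine L ∧ ∀ i, (L ∩ segment ℝ (x i) (y i)).Nonempty}.Finite ∧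
      {L : Set (ℝ × ℝ × ℝ) |
        IsLine L ∧ ∀ i, (L ∩ segment ℝ (x i) (y i)).Nonempty}.ncard = 4 := by
  refine ⟨fun k => rulingA (segmentFoot k) (-2), fun k => rulingA (segmentFoot k) 3, ?_⟩
  have hinj : Injective fun j => range (rulingB (transversalFoot j)) :=
    injective_range_rulingB.comp transversalFoot_injective
  exact setOf_isTransversal_seg_eq ▸
    ⟨finite_range _, by rw [ncard_range_of_injective hinj, Nat.card_fin]⟩
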